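/- arXiv:2003.00124 — 4 statements merged into one kernel-verified Lean document; each statement's English description precedes it below -/
import Mathlib

section
/- Let ω be a primitive cube root of unity, φ* = (1/√3)(1,1,1)ᵀ, and let X₁* = diag(1,ω,ω²), X₂* = diag(ω,ω²,1), X₃* = (1/3)[[−ω,2,2ω²],[2,−ω²,2ω],[2ω²,2ω,−1]], X₄* = (1/3)[[−ω²,2ω,2],[2ω,−1,2ω²],[2,2ω²,−ω]]. Denote by X_{i,μ} the spectral projector of X_i* onto eigenvalue μ ∈ {1, ω, ω²}. Then the free CHSH-3 expression ⟨φ*| f(X) |φ*⟩, where f is the signed sum of 24 products X_{i,μ}X_{j,ν} as given by f(X) = X_{1,1}X_{3,1} + X_{1,1}X_{4,1} − X_{1,1}X_{3,ω} − X_{1,1}X_{4,ω²} + X_{1,ω}X_{3,ω} + X_{1,ω}X_{4,ω} − X_{1,ω}X_{3,ω²} − X_{1,ω}X_{4,1} + X_{1,ω²}X_{3,ω²} + X_{1,ω²}X_{4,ω²} − X_{1,ω²}X_{3,1} − X_{1,ω²}X_{4,ω} + X_{2,1}X_{3,ω} + X_{2,1}X_{4,1} − X_{2,1}X_{3,1}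 − X_{2,1}X_{4,ω} + X_{2,ω}X_{4,ω} + X_{2,ω}X_{3,ω²} − X_{2,ω}X_{3,ω} − X_{2,ω}X_{4,ω²} + X_{2,ω²}X_{3,1} + X_{2,ω²}X_{4,ω²} − X_{2,ω²}X_{3,ω²} − X_{2,ω²}X_{4,1}, equals 4. -/
open Matrix

set_option maxHeartbeats 4000000 in
theorem stmt10 (ω : ℂ) (hω : ω ^ 2 + ω + 1 = 0)
    (φ : Fin 3 → ℂ) (hφ : φ = fun _ => ((1 / Real.sqrt 3 : ℝ) : ℂ))
    (X : Fin 4 → Matrix (Fin 3) (Fin 3) ℂ)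
    (hX0 : X 0 = !![1, 0, 0; 0, ω, 0; 0, 0, ω ^ 2])
    (hX1 : X 1 = !![ω, 0, 0; 0, ω ^ 2, 0; 0, 0, 1])
    (hX2 : X 2 = (1 / 3 : ℂ) •
      !![-ω, 2, 2 * ω ^ 2; 2, -ω ^ 2, 2 * ω; 2 * ω ^ 2, 2 * ω, -1])
    (hX3 : X 3 = (1 / 3 : ℂ) •
      !![-ω ^ 2, 2 * ω, 2; 2 * ω, -1, 2 * ω ^ 2; 2, 2 * ω ^ 2, -ω])
    -- P i k is the orthogonal spectral projector of X i onto the eigenvalue ω ^ k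
    (P : Fin 4 → Fin 3 → Matrix (Fin 3) (Fin 3) ℂ)
    (hHerm : ∀ i k, (P i k)ᴴ = P i k)
    (hOrth : ∀ i k l, P i k * P i l = if k = l then P i k else 0)
    (hRes : ∀ i, P i 0 + P i 1 + P i 2 = 1)
    (hSpec : ∀ i, X i = (1 : ℂ) • P i 0 + ω • P i 1 + ω ^ 2 • P i 2)
    (F : Matrix (Fin 3) (Fin 3) ℂ)
    (hF : F =
        P 0 0 * P 2 0 + P 0 0 * P 3 0 - P 0 0 * P 2 1 - P 0 0 * P 3 2
      + P 0 1 * P 2 1 + P 0 1 * P 3 1 - P 0 1 * P 2 2 - P 0 1 * P 3 0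
      + P 0 2 * P 2 2 + P 0 2 * P 3 2 - P 0 2 * P 2 0 - P 0 2 * P 3 1
      + P 1 0 * P 2 1 + P 1 0 * P 3 0 - P 1 0 * P 2 0 - P 1 0 * P 3 1
      + P 1 1 * P 3 1 + P 1 1 * P 2 2 - P 1 1 * P 2 1 - P 1 1 * P 3 2
      + P 1 2 * P 2 0 + P 1 2 * P 3 2 - P 1 2 * P 2 2 - P 1 2 * P 3 0) :
    star φ ⬝ᵥ F.mulVec φ = 4 := by
  have h2 : ω ^ 2 = -ω - 1 := by linear_combination hω
  have h3 : ω ^ 3 = 1 := by linear_combination (ω - 1) * hω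
  have h4 : ω ^ 4 = ω := by linear_combination (ω ^ 2 - ω) * hω
  have h5 : ω ^ 5 = ω ^ 2 := by linear_combination (ω ^ 3 - ω ^ 2) * hω
  have h6 : ω ^ 6 = 1 := by linear_combination (ω ^ 4 - ω ^ 3 + ω - 1) * hω
  have hsq : ∀ i, X i * X i = P i 0 + ω ^ 2 • P i 1 + ω • P i 2 := by
    intro i
    rw [hSpec i]
    simp only [mul_add, add_mul, smul_mul_assoc, mul_smul_comm, smul_smul, one_smul, hOrth]
    simp only [show ((0:Fin 3) = 1) = False by simp, show ((0:Fin 3) = 2) = False by simp,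
      show ((1:Fin 3) = 0) = False by simp, show ((1:Fin 3) = 2) = False by simp,
      show ((2:Fin 3) = 0) = False by simp, show ((2:Fin 3) = 1) = False by simp,
      if_true, if_false, eq_self_iff_true, smul_zero, add_zero, zero_add]
    match_scalars <;> (try simp only [h2, h3, h4]) <;>
      first
      | ring1
      | linear_combination hω
      | linear_combination -hω
      | linear_combination 2*hω
      | linear_combination -2*hω
      | linear_combination 3*hω
      | linear_combination -3*hω
  have hP : ∀ i,
      P i 0 = (1/3 : ℂ) • ((1 : Matrix (Fin 3) (Fin 3) ℂ) + X i + X i * X i)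
      ∧ P i 1 = (1/3 : ℂ) • ((1 : Matrix (Fin 3) (Fin 3) ℂ) + ω ^ 2 • X i + ω • (X i * X i))
      ∧ P i 2 = (1/3 : ℂ) • ((1 : Matrix (Fin 3) (Fin 3) ℂ) + ω • X i + ω ^ 2 • (X i * X i)) := by
    intro i
    refine ⟨?_, ?_, ?_⟩ <;>
      rw [hsq i, hSpec i, ← hRes i] <;>
      match_scalars <;> (try simp only [h2, h3, h4]) <;>
      first
      | ring1
      | linear_combination hω/3
      | linear_combination -hω/3
      | linear_combination (2/3)*hω
      | linear_combination (-2/3)*hω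
      | linear_combination hω
      | linear_combination -hω
  have hP00 : P 0 0 = (!![1, 0, 0; 0, 0, 0; 0, 0, 0] : Matrix (Fin 3) (Fin 3) ℂ) := by
    rw [(hP 0).1, hX0]
    simp only [Matrix.one_fin_three, Matrix.mul_fin_three, smul_smul, Matrix.smul_of,
      Matrix.smul_cons, Matrix.smul_empty, Matrix.of_add_of, Matrix.add_cons, Matrix.head_cons,
      Matrix.tail_cons, Matrix.empty_add_empty, smul_eq_mul]
    rw [← Matrix.ext_iff]
    simp only [Fin.forall_fin_succ, IsEmpty.forall_iff, and_true,
      Matrix.cons_val_zero, Matrix.cons_val_succ, Matrix.of_apply]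
    and_intros <;> ring_nf <;> (try simp only [h2, h3, h4, h5, h6]) <;> (try ring_nf)
  have hP01 : P 0 1 = (!![0, 0, 0; 0, 1, 0; 0, 0, 0] : Matrix (Fin 3) (Fin 3) ℂ) := by
    rw [(hP 0).2.1, hX0]
    simp only [Matrix.one_fin_three, Matrix.mul_fin_three, smul_smul, Matrix.smul_of,
      Matrix.smul_cons, Matrix.smul_empty, Matrix.of_add_of, Matrix.add_cons, Matrix.head_cons,
      Matrix.tail_cons, Matrix.empty_add_empty, smul_eq_mul]
    rw [← Matrix.ext_iff]
    simp only [Fin.forall_fin_succ, IsEmpty.forall_iff, and_true,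
      Matrix.cons_val_zero, Matrix.cons_val_succ, Matrix.of_apply]
    and_intros <;> ring_nf <;> (try simp only [h2, h3, h4, h5, h6]) <;> (try ring_nf)
  have hP02 : P 0 2 = (!![0, 0, 0; 0, 0, 0; 0, 0, 1] : Matrix (Fin 3) (Fin 3) ℂ) := by
    rw [(hP 0).2.2, hX0]
    simp only [Matrix.one_fin_three, Matrix.mul_fin_three, smul_smul, Matrix.smul_of,
      Matrix.smul_cons, Matrix.smul_empty, Matrix.of_add_of, Matrix.add_cons, Matrix.head_cons,
      Matrix.tail_cons, Matrix.empty_add_empty, smul_eq_mul]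
    rw [← Matrix.ext_iff]
    simp only [Fin.forall_fin_succ, IsEmpty.forall_iff, and_true,
      Matrix.cons_val_zero, Matrix.cons_val_succ, Matrix.of_apply]
    and_intros <;> ring_nf <;> (try simp only [h2, h3, h4, h5, h6]) <;> (try ring_nf)
  have hP10 : P 1 0 = (!![0, 0, 0; 0, 0, 0; 0, 0, 1] : Matrix (Fin 3) (Fin 3) ℂ) := by
    rw [(hP 1).1, hX1]
    simp only [Matrix.one_fin_three, Matrix.mul_fin_three, smul_smul, Matrix.smul_of,
      Matrix.smul_cons, Matrix.smul_empty, Matrix.of_add_of, Matrix.add_cons, Matrix.head_cons,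
      Matrix.tail_cons, Matrix.empty_add_empty, smul_eq_mul]
    rw [← Matrix.ext_iff]
    simp only [Fin.forall_fin_succ, IsEmpty.forall_iff, and_true,
      Matrix.cons_val_zero, Matrix.cons_val_succ, Matrix.of_apply]
    and_intros <;> ring_nf <;> (try simp only [h2, h3, h4, h5, h6]) <;> (try ring_nf)
  have hP11 : P 1 1 = (!![1, 0, 0; 0, 0, 0; 0, 0, 0] : Matrix (Fin 3) (Fin 3) ℂ) := by
    rw [(hP 1).2.1, hX1]
    simp only [Matrix.one_fin_three, Matrix.mul_fin_three, smul_smul, Matrix.smul_of,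
      Matrix.smul_cons, Matrix.smul_empty, Matrix.of_add_of, Matrix.add_cons, Matrix.head_cons,
      Matrix.tail_cons, Matrix.empty_add_empty, smul_eq_mul]
    rw [← Matrix.ext_iff]
    simp only [Fin.forall_fin_succ, IsEmpty.forall_iff, and_true,
      Matrix.cons_val_zero, Matrix.cons_val_succ, Matrix.of_apply]
    and_intros <;> ring_nf <;> (try simp only [h2, h3, h4, h5, h6]) <;> (try ring_nf)
  have hP12 : P 1 2 = (!![0, 0, 0; 0, 1, 0; 0, 0, 0] : Matrix (Fin 3) (Fin 3) ℂ) := by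
    rw [(hP 1).2.2, hX1]
    simp only [Matrix.one_fin_three, Matrix.mul_fin_three, smul_smul, Matrix.smul_of,
      Matrix.smul_cons, Matrix.smul_empty, Matrix.of_add_of, Matrix.add_cons, Matrix.head_cons,
      Matrix.tail_cons, Matrix.empty_add_empty, smul_eq_mul]
    rw [← Matrix.ext_iff]
    simp only [Fin.forall_fin_succ, IsEmpty.forall_iff, and_true,
      Matrix.cons_val_zero, Matrix.cons_val_succ, Matrix.of_apply]
    and_intros <;> ring_nf <;> (try simp only [h2, h3, h4, h5, h6]) <;> (try ring_nf)
  have hP20 : P 2 0 = (!![4/9, 4/9, -2/9; 4/9, 4/9, -2/9; -2/9, -2/9, 1/9] : Matrix (Fin 3) (Fin 3) ℂ) := by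
    rw [(hP 2).1, hX2]
    simp only [Matrix.one_fin_three, Matrix.mul_fin_three, smul_smul, Matrix.smul_of,
      Matrix.smul_cons, Matrix.smul_empty, Matrix.of_add_of, Matrix.add_cons, Matrix.head_cons,
      Matrix.tail_cons, Matrix.empty_add_empty, smul_eq_mul]
    rw [← Matrix.ext_iff]
    simp only [Fin.forall_fin_succ, IsEmpty.forall_iff, and_true,
      Matrix.cons_val_zero, Matrix.cons_val_succ, Matrix.of_apply]
    and_intros <;> ring_nf <;> (try simp only [h2, h3, h4, h5, h6]) <;> (try ring_nf)
  have hP21 : P 2 1 = (!![1/9, -2/9, -2/9; -2/9, 4/9, 4/9; -2/9, 4/9, 4/9] : Matrix (Fin 3) (Fin 3) ℂ) := by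
    rw [(hP 2).2.1, hX2]
    simp only [Matrix.one_fin_three, Matrix.mul_fin_three, smul_smul, Matrix.smul_of,
      Matrix.smul_cons, Matrix.smul_empty, Matrix.of_add_of, Matrix.add_cons, Matrix.head_cons,
      Matrix.tail_cons, Matrix.empty_add_empty, smul_eq_mul]
    rw [← Matrix.ext_iff]
    simp only [Fin.forall_fin_succ, IsEmpty.forall_iff, and_true,
      Matrix.cons_val_zero, Matrix.cons_val_succ, Matrix.of_apply]
    and_intros <;> ring_nf <;> (try simp only [h2, h3, h4, h5, h6]) <;> (try ring_nf)
  have hP22 : P 2 2 = (!![4/9, -2/9, 4/9; -2/9, 1/9, -2/9; 4/9, -2/9, 4/9] : Matrix (Fin 3) (Fin 3) ℂ) := by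
    rw [(hP 2).2.2, hX2]
    simp only [Matrix.one_fin_three, Matrix.mul_fin_three, smul_smul, Matrix.smul_of,
      Matrix.smul_cons, Matrix.smul_empty, Matrix.of_add_of, Matrix.add_cons, Matrix.head_cons,
      Matrix.tail_cons, Matrix.empty_add_empty, smul_eq_mul]
    rw [← Matrix.ext_iff]
    simp only [Fin.forall_fin_succ, IsEmpty.forall_iff, and_true,
      Matrix.cons_val_zero, Matrix.cons_val_succ, Matrix.of_apply]
    and_intros <;> ring_nf <;> (try simp only [h2, h3, h4, h5, h6]) <;> (try ring_nf)
  have hP30 : P 3 0 = (!![4/9, -2/9, 4/9; -2/9, 1/9, -2/9; 4/9, -2/9, 4/9] : Matrix (Fin 3) (Fin 3) ℂ) := by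
    rw [(hP 3).1, hX3]
    simp only [Matrix.one_fin_three, Matrix.mul_fin_three, smul_smul, Matrix.smul_of,
      Matrix.smul_cons, Matrix.smul_empty, Matrix.of_add_of, Matrix.add_cons, Matrix.head_cons,
      Matrix.tail_cons, Matrix.empty_add_empty, smul_eq_mul]
    rw [← Matrix.ext_iff]
    simp only [Fin.forall_fin_succ, IsEmpty.forall_iff, and_true,
      Matrix.cons_val_zero, Matrix.cons_val_succ, Matrix.of_apply]
    and_intros <;> ring_nf <;> (try simp only [h2, h3, h4, h5, h6]) <;> (try ring_nf)
  have hP31 : P 3 1 = (!![4/9, 4/9, -2/9; 4/9, 4/9, -2/9; -2/9, -2/9, 1/9] : Matrix (Fin 3) (Fin 3) ℂ) := by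
    rw [(hP 3).2.1, hX3]
    simp only [Matrix.one_fin_three, Matrix.mul_fin_three, smul_smul, Matrix.smul_of,
      Matrix.smul_cons, Matrix.smul_empty, Matrix.of_add_of, Matrix.add_cons, Matrix.head_cons,
      Matrix.tail_cons, Matrix.empty_add_empty, smul_eq_mul]
    rw [← Matrix.ext_iff]
    simp only [Fin.forall_fin_succ, IsEmpty.forall_iff, and_true,
      Matrix.cons_val_zero, Matrix.cons_val_succ, Matrix.of_apply]
    and_intros <;> ring_nf <;> (try simp only [h2, h3, h4, h5, h6]) <;> (try ring_nf)
  have hP32 : P 3 2 = (!![1/9, -2/9, -2/9; -2/9, 4/9, 4/9; -2/9, 4/9, 4/9] : Matrix (Fin 3) (Fin 3) ℂ) := by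
    rw [(hP 3).2.2, hX3]
    simp only [Matrix.one_fin_three, Matrix.mul_fin_three, smul_smul, Matrix.smul_of,
      Matrix.smul_cons, Matrix.smul_empty, Matrix.of_add_of, Matrix.add_cons, Matrix.head_cons,
      Matrix.tail_cons, Matrix.empty_add_empty, smul_eq_mul]
    rw [← Matrix.ext_iff]
    simp only [Fin.forall_fin_succ, IsEmpty.forall_iff, and_true,
      Matrix.cons_val_zero, Matrix.cons_val_succ, Matrix.of_apply]
    and_intros <;> ring_nf <;> (try simp only [h2, h3, h4, h5, h6]) <;> (try ring_nf)
  have hF4 : F = Matrix.of fun _ _ => (4/3 : ℂ) := by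
    rw [hF, hP00, hP01, hP02, hP10, hP11, hP12, hP20, hP21, hP22, hP30, hP31, hP32]
    simp only [Matrix.mul_fin_three]
    rw [← Matrix.ext_iff]
    simp only [Fin.forall_fin_succ, IsEmpty.forall_iff, and_true, Matrix.cons_val_zero,
      Matrix.cons_val_succ, Matrix.of_apply, Matrix.add_apply, Matrix.sub_apply]
    norm_num
  have hs : ((Real.sqrt 3 : ℝ) : ℂ)⁻¹ ^ 2 = 1/3 := by
    rw [← Complex.ofReal_inv, ← Complex.ofReal_pow, inv_pow,
      Real.sq_sqrt (by norm_num : (0:ℝ) ≤ 3)]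
    norm_num
  rw [hF4, hφ]
  simp [dotProduct, Matrix.mulVec, Fin.sum_univ_three, Complex.star_def, Complex.conj_ofReal]
  linear_combination 12 * hs
end

section
/- The 3×13 matrix B = (√3/9)·[[3,3,0,0,0,3,0,2,−1,2,2,2,−1],[3,0,3,0,0,0,3,2,2,−1,−1,2,2],[3,0,0,3,3,0,0,−1,2,2,2,−1,2]] satisfies: BᵀB equals the 13×13 matrix M* = (1/9)·[the moment matrix given in the paper], and hence M* is positive semidefinite. -/
open Matrix

private def matA : Matrix (Fin 3) (Fin 13) ℤ := Matrix.of
      ![![3, 3, 0, 0, 0, 3, 0, 2, -1, 2, 2, 2, -1],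
        ![3, 0, 3, 0, 0, 0, 3, 2, 2, -1, -1, 2, 2],
        ![3, 0, 0, 3, 3, 0, 0, -1, 2, 2, 2, -1, 2]]

private def matN : Matrix (Fin 13) (Fin 13) ℤ := Matrix.of
      ![![9, 3, 3, 3, 3, 3, 3, 3, 3, 3, 3, 3, 3],
        ![3, 3, 0, 0, 0, 3, 0, 2, -1, 2, 2, 2, -1],
        ![3, 0, 3, 0, 0, 0, 3, 2, 2, -1, -1, 2, 2],
        ![3, 0, 0, 3, 3, 0, 0, -1, 2, 2, 2, -1, 2],
        ![3, 0, 0, 3, 3, 0, 0, -1, 2, 2, 2, -1, 2],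
        ![3, 3, 0, 0, 0, 3, 0, 2, -1, 2, 2, 2, -1],
        ![3, 0, 3, 0, 0, 0, 3, 2, 2, -1, -1, 2, 2],
        ![3, 2, 2, -1, -1, 2, 2, 3, 0, 0, 0, 3, 0],
        ![3, -1, 2, 2, 2, -1, 2, 0, 3, 0, 0, 0, 3],
        ![3, 2, -1, 2, 2, 2, -1, 0, 0, 3, 3, 0, 0],
        ![3, 2, -1, 2, 2, 2, -1, 0, 0, 3, 3, 0, 0],
        ![3, 2, 2, -1, -1, 2, 2, 3, 0, 0, 0, 3, 0],
        ![3, -1, 2, 2, 2, -1, 2, 0, 3, 0, 0, 0, 3]]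

private lemma matKey : matAᵀ * matA = (3 : ℤ) • matN := by decide

set_option maxHeartbeats 1000000 in
theorem stmt12
    (B : Matrix (Fin 3) (Fin 13) ℝ)
    (hB : B = (Real.sqrt 3 / 9) • Matrix.of
      ![![3, 3, 0, 0, 0, 3, 0, 2, -1, 2, 2, 2, -1],
        ![3, 0, 3, 0, 0, 0, 3, 2, 2, -1, -1, 2, 2],
        ![3, 0, 0, 3, 3, 0, 0, -1, 2, 2, 2, -1, 2]])
    (M : Matrix (Fin 13) (Fin 13) ℝ)
    (hM : M = (1 / 9 : ℝ) • Matrix.of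
      ![![9, 3, 3, 3, 3, 3, 3, 3, 3, 3, 3, 3, 3],
        ![3, 3, 0, 0, 0, 3, 0, 2, -1, 2, 2, 2, -1],
        ![3, 0, 3, 0, 0, 0, 3, 2, 2, -1, -1, 2, 2],
        ![3, 0, 0, 3, 3, 0, 0, -1, 2, 2, 2, -1, 2],
        ![3, 0, 0, 3, 3, 0, 0, -1, 2, 2, 2, -1, 2],
        ![3, 3, 0, 0, 0, 3, 0, 2, -1, 2, 2, 2, -1],
        ![3, 0, 3, 0, 0, 0, 3, 2, 2, -1, -1, 2, 2],
        ![3, 2, 2, -1, -1, 2, 2, 3, 0, 0, 0, 3, 0],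
        ![3, -1, 2, 2, 2, -1, 2, 0, 3, 0, 0, 0, 3],
        ![3, 2, -1, 2, 2, 2, -1, 0, 0, 3, 3, 0, 0],
        ![3, 2, -1, 2, 2, 2, -1, 0, 0, 3, 3, 0, 0],
        ![3, 2, 2, -1, -1, 2, 2, 3, 0, 0, 0, 3, 0],
        ![3, -1, 2, 2, 2, -1, 2, 0, 3, 0, 0, 0, 3]]) :
    Bᵀ * B = M ∧ M.PosSemidef := by
  have h3 : Real.sqrt 3 * Real.sqrt 3 = 3 := Real.mul_self_sqrt (by norm_num)
  have hA : B = (Real.sqrt 3 / 9) • matA.map (Int.cast : ℤ → ℝ) := by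
    rw [hB]
    congr 1
    ext i j
    fin_cases i <;> fin_cases j <;> norm_num [matA, Matrix.cons_val_succ]
  have hN : M = (1 / 9 : ℝ) • matN.map (Int.cast : ℤ → ℝ) := by
    rw [hM]
    congr 1
    ext i j
    fin_cases i <;> fin_cases j <;> norm_num [matN, Matrix.cons_val_succ]
  have heq : Bᵀ * B = M := by
    rw [hA, hN]
    rw [Matrix.transpose_smul, Matrix.smul_mul, Matrix.mul_smul, smul_smul]
    rw [show (matA.map (Int.cast : ℤ → ℝ))ᵀ = matAᵀ.map (Int.cast : ℤ → ℝ) from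
      (Matrix.transpose_map).symm]
    rw [show matAᵀ.map (Int.cast : ℤ → ℝ) * matA.map (Int.cast : ℤ → ℝ)
        = (matAᵀ * matA).map (Int.cast : ℤ → ℝ) from
      (Matrix.map_mul (f := Int.castRingHom ℝ)).symm]
    rw [matKey]
    have hsm : (((3 : ℤ) • matN).map (Int.cast : ℤ → ℝ))
        = (3 : ℝ) • matN.map (Int.cast : ℤ → ℝ) := by
      ext i j
      simp only [Matrix.map_apply, Matrix.smul_apply]
      push_cast [zsmul_eq_mul]
      rw [smul_eq_mul]
    rw [hsm, smul_smul]
    congr 1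
    rw [div_mul_div_comm, h3]
    norm_num
  refine ⟨heq, ?_⟩
  rw [← heq]
  have hT : Bᵀ = Bᴴ := by
    ext i j
    simp [Matrix.conjTranspose_apply]
  rw [hT]
  exact Matrix.posSemidef_conjTranspose_mul_self B
end

section
/- The 13×13 matrix M* (as defined from the paper) has rank 3, and its eigenvalues are 7/3 with multiplicity 1, 4/3 with multiplicity 2, and 0 with multiplicity 10. -/
open Matrix Polynomial

def Pz : Matrix (Fin 13) (Fin 13) ℤ := Matrix.of ![![3, 0, 0, -1, -1, 0, 0, 1, -2, -2, -2, 1, -2],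
 ![1, 0, -1, 1, 1, -1, 0, -3, 3, 0, 0, -3, 3],
 ![1, 1, 1, 1, 1, 0, -1, -3, 0, 3, 3, -3, 0],
 ![1, -1, 0, 1, 0, 0, 0, 0, 0, 0, 0, 0, 0],
 ![1, -1, 0, 0, 1, 0, 0, 0, 0, 0, 0, 0, 0],
 ![1, 0, -1, 0, 0, 1, 0, 0, 0, 0, 0, 0, 0],
 ![1, 1, 1, 0, 0, 0, 1, 0, 0, 0, 0, 0, 0],
 ![1, 1, 0, 0, 0, 0, 0, 3, 0, 0, 0, 0, 0],
 ![1, 0, 1, 0, 0, 0, 0, 0, 3, 0, 0, 0, 0],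
 ![1, -1, -1, 0, 0, 0, 0, 0, 0, 3, 0, 0, 0],
 ![1, -1, -1, 0, 0, 0, 0, 0, 0, 0, 3, 0, 0],
 ![1, 1, 0, 0, 0, 0, 0, 0, 0, 0, 0, 3, 0],
 ![1, 0, 1, 0, 0, 0, 0, 0, 0, 0, 0, 0, 3]]
def Qz : Matrix (Fin 13) (Fin 13) ℤ := Matrix.of ![![36, 12, 12, 12, 12, 12, 12, 12, 12, 12, 12, 12, 12],
 ![0, 21, 21, -42, -42, 21, 21, 42, -21, -21, -21, 42, -21],
 ![0, -42, 21, 21, 21, -42, 21, -21, 42, -21, -21, -21, 42],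
 ![-36, 9, 9, 198, -54, 9, 9, 30, -33, -33, -33, 30, -33],
 ![-36, 9, 9, -54, 198, 9, 9, 30, -33, -33, -33, 30, -33],
 ![-36, -54, 9, 9, 9, 198, 9, -33, 30, -33, -33, -33, 30],
 ![-36, 9, -54, 9, 9, 9, 198, -33, -33, 30, 30, -33, -33],
 ![-12, -11, -11, 10, 10, -11, -11, 66, 3, 3, 3, -18, 3],
 ![-12, 10, -11, -11, -11, 10, -11, 3, 66, 3, 3, 3, -18],
 ![-12, -11, 10, -11, -11, -11, 10, 3, 3, 66, -18, 3, 3],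
 ![-12, -11, 10, -11, -11, -11, 10, 3, 3, -18, 66, 3, 3],
 ![-12, -11, -11, 10, 10, -11, -11, -18, 3, 3, 3, 66, 3],
 ![-12, 10, -11, -11, -11, 10, -11, 3, -18, 3, 3, 3, 66]]

def Nz : Matrix (Fin 13) (Fin 13) ℤ := Matrix.of
 ![![9, 3, 3, 3, 3, 3, 3, 3, 3, 3, 3, 3, 3],
  ![3, 3, 0, 0, 0, 3, 0, 2, -1, 2, 2, 2, -1],
  ![3, 0, 3, 0, 0, 0, 3, 2, 2, -1, -1, 2, 2],
  ![3, 0, 0, 3, 3, 0, 0, -1, 2, 2, 2, -1, 2],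
  ![3, 0, 0, 3, 3, 0, 0, -1, 2, 2, 2, -1, 2],
  ![3, 3, 0, 0, 0, 3, 0, 2, -1, 2, 2, 2, -1],
  ![3, 0, 3, 0, 0, 0, 3, 2, 2, -1, -1, 2, 2],
  ![3, 2, 2, -1, -1, 2, 2, 3, 0, 0, 0, 3, 0],
  ![3, -1, 2, 2, 2, -1, 2, 0, 3, 0, 0, 0, 3],
  ![3, 2, -1, 2, 2, 2, -1, 0, 0, 3, 3, 0, 0],
  ![3, 2, -1, 2, 2, 2, -1, 0, 0, 3, 3, 0, 0],
  ![3, 2, 2, -1, -1, 2, 2, 3, 0, 0, 0, 3, 0],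
  ![3, -1, 2, 2, 2, -1, 2, 0, 3, 0, 0, 0, 3]]

def ez : Fin 13 → ℤ := ![21, 12, 12, 0, 0, 0, 0, 0, 0, 0, 0, 0, 0]

set_option maxRecDepth 100000

lemma hPQz : Pz * Qz = Matrix.diagonal (fun _ => (252 : ℤ)) := by decide

lemma hNPz : Nz * Pz = Pz * Matrix.diagonal ez := by decide

lemma conj_charpoly {n R : Type*} [Fintype n] [DecidableEq n] [CommRing R]
    (P A Q : Matrix n n R) (h : P * Q = 1) :
    (P * A * Q).charpoly = A.charpoly := by
  have hmap : P.map C * Q.map C = 1 := by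
    have := congrArg ((C : R →+* R[X]).mapMatrix) h
    simpa using this
  have h2 : P.map C * Matrix.scalar n (X : R[X]) * Q.map C = Matrix.scalar n (X : R[X]) := by
    rw [← (Matrix.scalar_commute (X : R[X]) (Commute.all X) (P.map C)).eq,
      Matrix.mul_assoc, hmap, mul_one]
  have hc : charmatrix (P * A * Q) = P.map C * charmatrix A * Q.map C := by
    simp only [charmatrix, RingHom.mapMatrix_apply]
    rw [Matrix.mul_sub, Matrix.sub_mul, h2, Matrix.map_mul, Matrix.map_mul]
  rw [Matrix.charpoly, Matrix.charpoly, hc, Matrix.det_mul, Matrix.det_mul]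
  have hdet : (P.map C).det * (Q.map C).det = 1 := by
    rw [← Matrix.det_mul, hmap, Matrix.det_one]
  calc (P.map C).det * (charmatrix A).det * (Q.map C).det
      = (charmatrix A).det * ((P.map C).det * (Q.map C).det) := by ring
    _ = (charmatrix A).det := by rw [hdet, mul_one]

set_option maxHeartbeats 1000000 in
lemma hNzmap : Nz.map (Int.cast : ℤ → ℝ) = Matrix.of
      ![![9, 3, 3, 3, 3, 3, 3, 3, 3, 3, 3, 3, 3],
        ![3, 3, 0, 0, 0, 3, 0, 2, -1, 2, 2, 2, -1],
        ![3, 0, 3, 0, 0, 0, 3, 2, 2, -1, -1, 2, 2],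
        ![3, 0, 0, 3, 3, 0, 0, -1, 2, 2, 2, -1, 2],
        ![3, 0, 0, 3, 3, 0, 0, -1, 2, 2, 2, -1, 2],
        ![3, 3, 0, 0, 0, 3, 0, 2, -1, 2, 2, 2, -1],
        ![3, 0, 3, 0, 0, 0, 3, 2, 2, -1, -1, 2, 2],
        ![3, 2, 2, -1, -1, 2, 2, 3, 0, 0, 0, 3, 0],
        ![3, -1, 2, 2, 2, -1, 2, 0, 3, 0, 0, 0, 3],
        ![3, 2, -1, 2, 2, 2, -1, 0, 0, 3, 3, 0, 0],
        ![3, 2, -1, 2, 2, 2, -1, 0, 0, 3, 3, 0, 0],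
        ![3, 2, 2, -1, -1, 2, 2, 3, 0, 0, 0, 3, 0],
        ![3, -1, 2, 2, 2, -1, 2, 0, 3, 0, 0, 0, 3]] := by
  ext i j
  fin_cases i <;> fin_cases j <;> norm_num [Nz]

lemma hPQr : (Pz.map (Int.cast : ℤ → ℝ)) * (Qz.map (Int.cast : ℤ → ℝ)) =
    Matrix.diagonal (fun _ => (252 : ℝ)) := by
  have h := congrArg ((Int.castRingHom ℝ).mapMatrix) hPQz
  rw [_root_.map_mul] at h
  simp only [RingHom.mapMatrix_apply] at h
  show Pz.map ⇑(Int.castRingHom ℝ) * Qz.map ⇑(Int.castRingHom ℝ) = _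
  rw [h, Matrix.diagonal_map (by simp)]
  norm_num

lemma hNPr' : Nz.map (Int.cast : ℤ → ℝ) * (Pz.map (Int.cast : ℤ → ℝ)) =
    (Pz.map (Int.cast : ℤ → ℝ)) * Matrix.diagonal (fun i => ((ez i : ℤ) : ℝ)) := by
  have h := congrArg ((Int.castRingHom ℝ).mapMatrix) hNPz
  rw [_root_.map_mul, _root_.map_mul] at h
  simp only [RingHom.mapMatrix_apply] at h
  show Nz.map ⇑(Int.castRingHom ℝ) * Pz.map ⇑(Int.castRingHom ℝ) = _
  rw [h, Matrix.diagonal_map (by simp)]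
  rfl

set_option maxHeartbeats 4000000 in
theorem stmt13
    (M : Matrix (Fin 13) (Fin 13) ℝ)
    (hM : M = (1 / 9 : ℝ) • Matrix.of
      ![![9, 3, 3, 3, 3, 3, 3, 3, 3, 3, 3, 3, 3],
        ![3, 3, 0, 0, 0, 3, 0, 2, -1, 2, 2, 2, -1],
        ![3, 0, 3, 0, 0, 0, 3, 2, 2, -1, -1, 2, 2],
        ![3, 0, 0, 3, 3, 0, 0, -1, 2, 2, 2, -1, 2],
        ![3, 0, 0, 3, 3, 0, 0, -1, 2, 2, 2, -1, 2],
        ![3, 3, 0, 0, 0, 3, 0, 2, -1, 2, 2, 2, -1],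
        ![3, 0, 3, 0, 0, 0, 3, 2, 2, -1, -1, 2, 2],
        ![3, 2, 2, -1, -1, 2, 2, 3, 0, 0, 0, 3, 0],
        ![3, -1, 2, 2, 2, -1, 2, 0, 3, 0, 0, 0, 3],
        ![3, 2, -1, 2, 2, 2, -1, 0, 0, 3, 3, 0, 0],
        ![3, 2, -1, 2, 2, 2, -1, 0, 0, 3, 3, 0, 0],
        ![3, 2, 2, -1, -1, 2, 2, 3, 0, 0, 0, 3, 0],
        ![3, -1, 2, 2, 2, -1, 2, 0, 3, 0, 0, 0, 3]]) :
    M.rank = 3 ∧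
      M.charpoly = (X - C (7 / 3)) * (X - C (4 / 3)) ^ 2 * X ^ 10 := by
  have f : ℤ →+* ℝ := Int.castRingHom ℝ
  set Pr : Matrix (Fin 13) (Fin 13) ℝ := Pz.map (Int.cast : ℤ → ℝ) with hPr
  set Qr' : Matrix (Fin 13) (Fin 13) ℝ := Qz.map (Int.cast : ℤ → ℝ) with hQr'
  set dr : Fin 13 → ℝ := ![7/3, 4/3, 4/3, 0, 0, 0, 0, 0, 0, 0, 0, 0, 0] with hdr
  set Qr : Matrix (Fin 13) (Fin 13) ℝ := (252 : ℝ)⁻¹ • Qr' with hQr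
  -- map the integer identities to ℝ
  have h1 : Pr * Qr' = Matrix.diagonal (fun _ => (252 : ℝ)) := by
    rw [hPr, hQr']; exact hPQr
  have hd252 : Matrix.diagonal (fun _ : Fin 13 => (252 : ℝ)) =
      (252 : ℝ) • (1 : Matrix (Fin 13) (Fin 13) ℝ) := by
    ext i j
    rcases eq_or_ne i j with rfl | h
    · simp
    · simp [Matrix.diagonal_apply_ne _ h, Matrix.one_apply_ne h]
  have hPQ : Pr * Qr = 1 := by
    rw [hQr, Matrix.mul_smul, h1, hd252, smul_smul]
    norm_num
  have hdetP : IsUnit Pr.det := Matrix.isUnit_det_of_right_inverse hPQ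
  have hdetQ : IsUnit Qr.det := Matrix.isUnit_det_of_left_inverse hPQ
  have hMN : M = (9 : ℝ)⁻¹ • Nz.map (Int.cast : ℤ → ℝ) := by
    rw [hM, hNzmap]
    norm_num
  have hNPr : Nz.map (Int.cast : ℤ → ℝ) * Pr =
      Pr * Matrix.diagonal (fun i => ((ez i : ℤ) : ℝ)) := by
    rw [hPr]; exact hNPr'
  have hdiag : (9 : ℝ)⁻¹ • Matrix.diagonal (fun i => ((ez i : ℤ) : ℝ)) =
      Matrix.diagonal dr := by
    ext i j
    rcases eq_or_ne i j with rfl | h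
    · fin_cases i <;>
        norm_num [ez, hdr, Matrix.smul_apply, Matrix.diagonal_apply_eq]
    · simp [Matrix.diagonal_apply_ne _ h]
  have hMP : M * Pr = Pr * Matrix.diagonal dr := by
    rw [hMN, Matrix.smul_mul, hNPr, ← Matrix.mul_smul, hdiag]
  have hdecomp : M = Pr * Matrix.diagonal dr * Qr := by
    calc M = M * (Pr * Qr) := by rw [hPQ, mul_one]
      _ = M * Pr * Qr := by rw [Matrix.mul_assoc]
      _ = Pr * Matrix.diagonal dr * Qr := by rw [hMP]
  constructor
  · rw [hdecomp, Matrix.rank_mul_eq_left_of_isUnit_det Qr _ hdetQ,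
      Matrix.rank_mul_eq_right_of_isUnit_det Pr _ hdetP, Matrix.rank_diagonal]
    have hiff : ∀ i : Fin 13, dr i ≠ 0 ↔ i ∈ ({0, 1, 2} : Finset (Fin 13)) := by
      intro i
      fin_cases i <;> norm_num [hdr, Fin.ext_iff]
    rw [Fintype.card_congr (Equiv.subtypeEquivRight hiff)]
    decide
  · rw [hdecomp, conj_charpoly _ _ _ hPQ,
      Matrix.charpoly_of_upperTriangular _ (Matrix.blockTriangular_diagonal dr)]
    simp only [Matrix.diagonal_apply_eq]
    rw [hdr]
    simp only [Fin.prod_univ_succ, Fin.prod_univ_zero, Matrix.cons_val_zero,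
      Matrix.cons_val_succ, map_zero, sub_zero, mul_one]
    ring
end

section
/- For classical (deterministic) assignments, the CHSH-3 expression is bounded by 2: for any functions a₁, a₂, b₁, b₂ taking values in the cube roots of unity {1, ω, ω²} (i.e. deterministic outcomes), the value I₃ = [a₁ = b₁] + [a₂ = ω²b₁] + [a₂ = b₂] + [a₁ = b₂] − [a₁ = ω²b₁] − [a₂ = b₁] − [a₂ = ω²b₂] − [a₁ = ωb₂] is at most 2, where [·] is the indicator (1 if true, 0 if false). -/
open scoped Classical in
theorem stmt14 (ω : ℂ) (hω : ω ^ 2 + ω + 1 = 0)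
    (a₁ a₂ b₁ b₂ : ℂ)
    (ha₁ : a₁ ∈ ({1, ω, ω ^ 2} : Set ℂ)) (ha₂ : a₂ ∈ ({1, ω, ω ^ 2} : Set ℂ))
    (hb₁ : b₁ ∈ ({1, ω, ω ^ 2} : Set ℂ)) (hb₂ : b₂ ∈ ({1, ω, ω ^ 2} : Set ℂ)) :
    (if a₁ = b₁ then (1 : ℝ) else 0) + (if a₂ = ω ^ 2 * b₁ then 1 else 0)
      + (if a₂ = b₂ then 1 else 0) + (if a₁ = b₂ then 1 else 0)
      - (if a₁ = ω ^ 2 * b₁ then 1 else 0) - (if a₂ = b₁ then 1 else 0)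
      - (if a₂ = ω ^ 2 * b₂ then 1 else 0) - (if a₁ = ω * b₂ then 1 else 0)
      ≤ 2 := by
  have h1 : ω ≠ 1 := by
    rintro rfl; norm_num at hω
  have h3 : ω ^ 3 = 1 := by linear_combination (ω - 1) * hω
  have h2 : ω ^ 2 ≠ 1 := by
    intro h
    have he : ω = -2 := by linear_combination hω - h
    rw [he] at h; norm_num at h
  have h21 : ω ^ 2 ≠ ω := by
    intro h
    have he : ω = -1/2 := by linear_combination (hω - h)/2
    rw [he] at h; norm_num at h
  have h1' : (1 : ℂ) ≠ ω := Ne.symm h1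
  have h2' : (1 : ℂ) ≠ ω ^ 2 := Ne.symm h2
  have h21' : ω ≠ ω ^ 2 := Ne.symm h21
  have e1 : ω ^ 2 * ω ^ 2 = ω := by linear_combination ω * h3
  have e2 : ω ^ 2 * ω = 1 := by linear_combination h3
  have e3 : ω * ω ^ 2 = 1 := by linear_combination h3
  have e4 : ω * ω = ω ^ 2 := by ring
  simp only [Set.mem_insert_iff, Set.mem_singleton_iff] at ha₁ ha₂ hb₁ hb₂
  rcases ha₁ with rfl | rfl | rfl <;> rcases ha₂ with rfl | rfl | rfl <;>
    rcases hb₁ with rfl | rfl | rfl <;> rcases hb₂ with rfl | rfl | rfl <;>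
    simp only [e1, e2, e3, e4, mul_one] <;>
    norm_num [h1, h2, h21, h1', h2', h21']
end
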